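/- Let d ≥ 1, v > 0, and let X₁, …, X_N ∈ ℝ^d and X'₁, …, X'_N ∈ ℝ^d. Let K be the real N × N Gaussian cross Gram matrix with entries K_{ij} = exp(−‖X_i − X'_j‖²/(2v)). Then the sum of the singular values of K (its nuclear norm) is at most N. -/

import Mathlib

open Matrix BigOperators

/-- The nuclear norm of a real matrix `M`: the sum of its singular values, where the singular
values are the square roots of the eigenvalues of the symmetric PSD matrix `Mᵀ M`. -/
noncomputable def nuclearNorm {m n : ℕ} (M : Matrix (Fin m) (Fin n) ℝ) : ℝ :=
  ∑ i, Real.sqrt ((show (Mᵀ * M).IsHermitian by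
    simpa using Matrix.isHermitian_conjTranspose_mul_self M).eigenvalues i)

/-!
The Gaussian kernel is positive semidefinite: `exp (-‖x - y‖² / 2v)` is `exp (⟪x, y⟫ / v)` rescaled
by a positive diagonal, and the entrywise exponential of a PSD matrix is a convergent sum of
Hadamard powers, which are PSD by Schur's product theorem. Hence the Gram matrix of the `2N` points
`X ⊔ X'` is `Bᵀ B`, and `K`, its off-diagonal block, factors as `Φᵀ Ψ` where `Φ` and `Ψ` have unit
columns because the kernel is `1` on the diagonal.

For any factorisation `K = Φᵀ Ψ` and right singular vectors `vᵢ`, the singular value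
`σᵢ = ‖K vᵢ‖` equals `⟪Φ uᵢ, Ψ vᵢ⟫` with `uᵢ = K vᵢ / σᵢ`. The `K vᵢ` are pairwise orthogonal, so
AM-GM and Bessel's inequality applied to the rows of `Φ` and `Ψ` give
`∑ σᵢ ≤ (‖Φ‖_F² + ‖Ψ‖_F²) / 2 = N`.
-/

open scoped InnerProductSpace ComplexOrder Nat

namespace Matrix

variable {ι : Type*} [Fintype ι]

theorem PosSemidef.map_pow {𝕜 : Type*} [RCLike 𝕜] {A : Matrix ι ι 𝕜}
    (hA : A.PosSemidef) : ∀ k : ℕ, (A.map (· ^ k)).PosSemidef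
  | 0 => by
    convert posSemidef_gram 𝕜 (fun _ : ι => (1 : 𝕜)) using 1
    ext; simp
  | k + 1 => by
    convert (hA.map_pow k).hadamard hA using 1
    ext; simp [pow_succ]

theorem PosSemidef.map_exp {A : Matrix ι ι ℝ} (hA : A.PosSemidef) :
    (A.map Real.exp).PosSemidef := by
  refine .of_dotProduct_mulVec_nonneg ?_ fun x => ?_
  · exact hA.isHermitian.map _ fun _ => rfl
  have hquad (M : Matrix ι ι ℝ) : star x ⬝ᵥ (M *ᵥ x) = ∑ p, ∑ q, x p * M p q * x q := by
    simp [dotProduct, mulVec, Finset.mul_sum, mul_assoc]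
  have hsum : HasSum (fun k => star x ⬝ᵥ (A.map (· ^ k) *ᵥ x) / k !)
      (star x ⬝ᵥ (A.map Real.exp *ᵥ x)) := by
    simp only [hquad, Finset.sum_div, map_apply]
    refine hasSum_sum fun p _ => hasSum_sum fun q _ => ?_
    simpa only [Real.exp_eq_exp_ℝ, mul_div_assoc', div_mul_eq_mul_div] using
      ((NormedSpace.expSeries_div_hasSum_exp (A p q)).mul_left (x p)).mul_right (x q)
  exact hsum.nonneg fun k => div_nonneg ((hA.map_pow k).dotProduct_mulVec_nonneg x) (by positivity)

theorem posSemidef_gaussian_gram {E : Type*} [NormedAddCommGroup E] [InnerProductSpace ℝ E]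
    {v : ℝ} (hv : 0 < v) (Y : ι → E) :
    (of fun p q => Real.exp (-‖Y p - Y q‖ ^ 2 / (2 * v))).PosSemidef := by
  classical
  have hE := ((posSemidef_gram ℝ Y).smul (inv_nonneg.2 hv.le)).map_exp
  convert hE.conjTranspose_mul_mul_same (diagonal fun p => Real.exp (-‖Y p‖ ^ 2 / (2 * v)))
    using 1
  ext p q
  simp only [of_apply, diagonal_conjTranspose, diagonal_mul, mul_diagonal, map_apply, smul_apply,
    gram_apply, star_trivial, smul_eq_mul, ← Real.exp_add]
  congr 1
  rw [norm_sub_sq_real]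
  field_simp
  ring

end Matrix

theorem sum_sq_inner_div_norm_le {E ι : Type*} [NormedAddCommGroup E] [InnerProductSpace ℝ E]
    [Fintype ι] {w : ι → E} (hw : Pairwise fun i j => ⟪w i, w j⟫_ℝ = 0) (x : E) :
    ∑ i, (⟪w i, x⟫_ℝ / ‖w i‖) ^ 2 ≤ ‖x‖ ^ 2 := by
  -- the zero vectors contribute `0 / 0 = 0`; the others normalise to an orthonormal family
  classical
  let e : {i // w i ≠ 0} → E := fun i => ‖w i‖⁻¹ • w i
  have he : Orthonormal ℝ e := ⟨fun i => norm_smul_inv_norm i.2, fun i j h => by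
    simp [e, real_inner_smul_left, real_inner_smul_right, hw (Subtype.coe_injective.ne h)]⟩
  calc ∑ i, (⟪w i, x⟫_ℝ / ‖w i‖) ^ 2
      = ∑ i : {i // w i ≠ 0}, ‖⟪e i, x⟫_ℝ‖ ^ 2 := by
        have hzero : ∑ i : {i // ¬w i ≠ 0}, (⟪w i, x⟫_ℝ / ‖w i‖) ^ 2 = 0 :=
          Finset.sum_eq_zero fun i _ => by simp [not_not.mp i.2]
        rw [← Fintype.sum_subtype_add_sum_subtype (fun i => w i ≠ 0), hzero, add_zero]
        simp [e, real_inner_smul_left, div_eq_inv_mul, mul_pow]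
    _ ≤ ‖x‖ ^ 2 := he.sum_inner_products_le x

namespace Matrix

variable {κ m n : Type*} [Fintype κ] [Fintype m] [Fintype n] [DecidableEq m] [DecidableEq n]

theorem sum_sq_norm_toEuclideanLin_div_le_trace {ι : Type*} [Fintype ι] (Φ : Matrix κ m ℝ)
    {w : ι → EuclideanSpace ℝ m} (hw : Pairwise fun i j => ⟪w i, w j⟫_ℝ = 0) :
    ∑ i, (‖toEuclideanLin Φ (w i)‖ / ‖w i‖) ^ 2 ≤ (Φᵀ * Φ).trace := by
  have hrow (y : EuclideanSpace ℝ m) :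
      ‖toEuclideanLin Φ y‖ ^ 2 = ∑ r, ⟪y, WithLp.toLp 2 (Φ r)⟫_ℝ ^ 2 := by
    simp [EuclideanSpace.norm_sq_eq, toLpLin_apply, EuclideanSpace.inner_eq_star_dotProduct,
      mulVec, dotProduct_comm]
  calc ∑ i, (‖toEuclideanLin Φ (w i)‖ / ‖w i‖) ^ 2
      = ∑ r, ∑ i, (⟪w i, WithLp.toLp 2 (Φ r)⟫_ℝ / ‖w i‖) ^ 2 := by
        simp only [div_pow, hrow, Finset.sum_div]
        exact Finset.sum_comm
    _ ≤ ∑ r, ‖WithLp.toLp 2 (Φ r)‖ ^ 2 :=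
        Finset.sum_le_sum fun r _ => sum_sq_inner_div_norm_le hw _
    _ = (Φᵀ * Φ).trace := by
        simp only [EuclideanSpace.norm_sq_eq, Real.norm_eq_abs, sq_abs]
        simp only [sq, trace, diag_apply, mul_apply, transpose_apply]
        exact Finset.sum_comm

theorem inner_toEuclideanLin_eigenvectorBasis (K : Matrix m n ℝ) (hH : (Kᵀ * K).IsHermitian)
    (i j : n) :
    ⟪toEuclideanLin K (hH.eigenvectorBasis i), toEuclideanLin K (hH.eigenvectorBasis j)⟫_ℝ =
      if i = j then hH.eigenvalues i else 0 := by
  rw [← LinearMap.adjoint_inner_right, ← toEuclideanLin_conjTranspose_eq_adjoint,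
    conjTranspose_eq_transpose_of_trivial, ← LinearMap.comp_apply, ← toLpLin_mul, toLpLin_apply,
    hH.mulVec_eigenvectorBasis, WithLp.toLp_smul, WithLp.toLp_ofLp, real_inner_smul_right,
    orthonormal_iff_ite.mp hH.eigenvectorBasis.orthonormal]
  split_ifs with h <;> simp [h]

theorem norm_toEuclideanLin_transpose_mul_le (Φ : Matrix κ m ℝ) (Ψ : Matrix κ n ℝ)
    (x : EuclideanSpace ℝ n) :
    ‖toEuclideanLin (Φᵀ * Ψ) x‖ ≤
      ((‖toEuclideanLin Φ (toEuclideanLin (Φᵀ * Ψ) x)‖ / ‖toEuclideanLin (Φᵀ * Ψ) x‖) ^ 2 +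
        ‖toEuclideanLin Ψ x‖ ^ 2) / 2 := by
  classical
  set y := toEuclideanLin (Φᵀ * Ψ) x
  rcases eq_or_ne y 0 with hy | hy
  · rw [hy, norm_zero]; positivity
  have hy_pos : 0 < ‖y‖ := norm_pos_iff.mpr hy
  have hy_sq : ‖y‖ ^ 2 ≤ ‖toEuclideanLin Φ y‖ * ‖toEuclideanLin Ψ x‖ := by
    calc ‖y‖ ^ 2 = ⟪y, toEuclideanLin Φᴴ (toEuclideanLin Ψ x)⟫_ℝ := by
          rw [← real_inner_self_eq_norm_sq, conjTranspose_eq_transpose_of_trivial]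
          simp [y]
      _ = ⟪toEuclideanLin Φ y, toEuclideanLin Ψ x⟫_ℝ := by
          rw [toEuclideanLin_conjTranspose_eq_adjoint, LinearMap.adjoint_inner_right]
      _ ≤ _ := real_inner_le_norm _ _
  have hy_le : ‖y‖ ≤ ‖toEuclideanLin Φ y‖ / ‖y‖ * ‖toEuclideanLin Ψ x‖ := by
    rw [div_mul_eq_mul_div, le_div_iff₀ hy_pos, ← sq]
    exact hy_sq
  linarith [two_mul_le_add_sq (‖toEuclideanLin Φ y‖ / ‖y‖) ‖toEuclideanLin Ψ x‖]

end Matrix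

theorem nuclearNorm_eq_sum_norm_toEuclideanLin_eigenvectorBasis {m n : ℕ}
    (K : Matrix (Fin m) (Fin n) ℝ) (hH : (Kᵀ * K).IsHermitian) :
    nuclearNorm K = ∑ i, ‖toEuclideanLin K (hH.eigenvectorBasis i)‖ := by
  refine Finset.sum_congr rfl fun i _ => ?_
  rw [norm_eq_sqrt_real_inner, inner_toEuclideanLin_eigenvectorBasis, if_pos rfl]

theorem nuclearNorm_transpose_mul_le {κ : Type*} [Fintype κ] {m n : ℕ}
    (Φ : Matrix κ (Fin m) ℝ) (Ψ : Matrix κ (Fin n) ℝ) :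
    nuclearNorm (Φᵀ * Ψ) ≤ ((Φᵀ * Φ).trace + (Ψᵀ * Ψ).trace) / 2 := by
  have hH : ((Φᵀ * Ψ)ᵀ * (Φᵀ * Ψ)).IsHermitian := by
    simpa using isHermitian_conjTranspose_mul_self (Φᵀ * Ψ)
  set b := hH.eigenvectorBasis
  set K := toEuclideanLin (Φᵀ * Ψ)
  have hKb : Pairwise fun i j => ⟪K (b i), K (b j)⟫_ℝ = 0 := fun i j h =>
    (inner_toEuclideanLin_eigenvectorBasis _ hH i j).trans (if_neg h)
  calc nuclearNorm (Φᵀ * Ψ) = ∑ i, ‖K (b i)‖ :=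
        nuclearNorm_eq_sum_norm_toEuclideanLin_eigenvectorBasis _ hH
    _ ≤ ∑ i, ((‖toEuclideanLin Φ (K (b i))‖ / ‖K (b i)‖) ^ 2 +
          ‖toEuclideanLin Ψ (b i)‖ ^ 2) / 2 :=
        Finset.sum_le_sum fun i _ => norm_toEuclideanLin_transpose_mul_le Φ Ψ (b i)
    _ = (∑ i, (‖toEuclideanLin Φ (K (b i))‖ / ‖K (b i)‖) ^ 2 +
          ∑ i, (‖toEuclideanLin Ψ (b i)‖ / ‖b i‖) ^ 2) / 2 := by
        simp [b.norm_eq_one, ← Finset.sum_add_distrib, Finset.sum_div]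
    _ ≤ ((Φᵀ * Φ).trace + (Ψᵀ * Ψ).trace) / 2 := by
        gcongr
        · exact sum_sq_norm_toEuclideanLin_div_le_trace Φ hKb
        · exact sum_sq_norm_toEuclideanLin_div_le_trace Ψ b.orthonormal.2

open scoped MatrixOrder in
theorem Matrix.PosSemidef.nuclearNorm_toBlocks₁₂_le {m n : ℕ}
    {G : Matrix (Fin m ⊕ Fin n) (Fin m ⊕ Fin n) ℝ} (hG : G.PosSemidef) :
    nuclearNorm G.toBlocks₁₂ ≤ (G.toBlocks₁₁.trace + G.toBlocks₂₂.trace) / 2 := by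
  obtain ⟨B, rfl⟩ := CStarAlgebra.nonneg_iff_eq_star_mul_self.mp hG.nonneg
  rw [star_eq_conjTranspose, conjTranspose_eq_transpose_of_trivial]
  exact nuclearNorm_transpose_mul_le (B.submatrix id Sum.inl) (B.submatrix id Sum.inr)

theorem nuclearNorm_gaussian_cross_gram_le_general {d N : ℕ} (v : ℝ) (hv : 0 < v)
    (X X' : Fin N → EuclideanSpace ℝ (Fin d)) :
    nuclearNorm
        (Matrix.of fun i j : Fin N => Real.exp (-‖X i - X' j‖ ^ 2 / (2 * v))) ≤ N := by
  have hG := posSemidef_gaussian_gram hv (Sum.elim X X')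
  refine hG.nuclearNorm_toBlocks₁₂_le.trans_eq ?_
  simp [toBlocks₁₁, toBlocks₂₂, trace]

/-- The nuclear norm (sum of singular values) of the Gaussian cross Gram matrix
`K i j = exp(-‖Xᵢ - X'ⱼ‖²/(2v))` between two batches of `N` points in `ℝ^d` is at most `N`. -/
theorem nuclearNorm_gaussian_cross_gram_le {d N : ℕ} (hd : 1 ≤ d) (v : ℝ) (hv : 0 < v)
    (X X' : Fin N → EuclideanSpace ℝ (Fin d)) :
    nuclearNorm
        (Matrix.of fun i j : Fin N => Real.exp (-‖X i - X' j‖ ^ 2 / (2 * v))) ≤ N :=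
  nuclearNorm_gaussian_cross_gram_le_general v hv X X'
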